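/- arXiv:2105.12813 — 2 statements merged into one kernel-verified Lean document; each statement's English description precedes it below -/
import Mathlib

section
/- For every pair of integers n, j with n ≥ 3 and 1 ≤ j ≤ n−2, one has (e^{−2}/(4n³))·(n^{1−j/n}·κ(j/n))^n ≤ A6(n,j) ≤ 2·(n^{1−j/n}·κ(j/n))^n. -/
/-!
Put `m = n - j` and `N = C(n, 2)`. Then `(n ^ (1 - j/n) * κ(j/n)) ^ n = (e n² / (2m)) ^ m` and
`A6 n j = N^m / m! * (e^(-μ6) + D6)`.

Since `N ≤ n²/2` and `m^m / m! ≤ e^m`, the factor `N^m / m!` is at most `(e n² / (2m)) ^ m`.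
Conversely, monotonicity of Stirling's sequence gives `m! ≤ e √m (m/e)^m`, and
`(n/(n-1))^m ≤ e` because `m < n`; so `N^m / m!` is at least `(e n² / (2m)) ^ m / (e² n)`.

The second factor lies between `1/n²` and `2`: `D6 ≤ 1`, and every term of the minimum defining
`D6` is at least `1/n²`, since `d6` and `μ6 = C(m, 2) U` both dominate the summand `U ≥ 1/n`
of `d6`.
-/

noncomputable def mu6 (n j : ℕ) : ℝ :=
  ((n - j).choose 2 : ℝ) * ((n : ℝ) * ((n : ℝ) - 1) * (4 * (n : ℝ) - 5)) /
    (6 * (Nat.choose n 2 : ℝ) ^ 2)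

noncomputable def d6 (n j : ℕ) : ℝ :=
  let N : ℝ := (Nat.choose n 2 : ℝ)
  let m : ℝ := ((n - j : ℕ) : ℝ)
  let U : ℝ := (n : ℝ) * ((n : ℝ) - 1) * (4 * (n : ℝ) - 5) / (6 * N ^ 2)
  let V : ℝ := 4 * (m - 2) * ((n : ℝ) * ((n : ℝ) - 1) * (2 * (n : ℝ) - 1)) / (6 * N ^ 2)
  let W : ℝ := 3 * (m - 2) * (n : ℝ) * ((n : ℝ) - 1) / ((4 * (n : ℝ) - 5) * N)
  let Z : ℝ := 2 * (m - 2) * (2 * (n : ℝ) - 1) * ((n : ℝ) + 1) / ((4 * (n : ℝ) - 5) * N)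
  U + 2 * (V + W + Z)

noncomputable def D6 (n j : ℕ) : ℝ :=
  min (d6 n j) (min (2 * mu6 n j * d6 n j) 1)

noncomputable def kappa (x : ℝ) : ℝ := (Real.exp 1 / 2) ^ (1 - x) * (1 - x) ^ (-(1 - x))

noncomputable def A6 (n j : ℕ) : ℝ :=
  ((Nat.choose n 2 : ℝ) ^ (n - j) / ((n - j).factorial : ℝ)) *
    Real.exp (-(mu6 n j)) * (1 + Real.exp (mu6 n j) * D6 n j)

open Real Nat

lemma factorial_le_exp_one_mul_sqrt_mul_pow {m : ℕ} (hm : m ≠ 0) :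
    (m ! : ℝ) ≤ exp 1 * √m * (m / exp 1) ^ m := by
  obtain ⟨k, rfl⟩ := Nat.exists_eq_succ_of_ne_zero hm
  have hmono : Stirling.stirlingSeq (k + 1) ≤ Stirling.stirlingSeq 1 :=
    Stirling.stirlingSeq'_antitone (Nat.zero_le k)
  rw [Stirling.stirlingSeq_one, Stirling.stirlingSeq, div_le_iff₀ (by positivity)] at hmono
  calc ((k + 1) ! : ℝ)
      ≤ exp 1 / √2 * (√(2 * (k + 1 : ℕ)) * ((k + 1 : ℕ) / exp 1) ^ (k + 1)) := by
        exact_mod_cast hmono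
    _ = _ := by
        rw [Real.sqrt_mul zero_le_two]
        field_simp

lemma add_one_pow_le_exp_one_mul_pow {k m : ℕ} (hm : m ≤ k) :
    ((k : ℝ) + 1) ^ m ≤ exp 1 * (k : ℝ) ^ m := by
  rcases Nat.eq_zero_or_pos k with rfl | hk
  · obtain rfl : m = 0 := by omega
    simp [one_le_exp zero_le_one]
  have hk' : (0 : ℝ) < k := by exact_mod_cast hk
  calc ((k : ℝ) + 1) ^ m = (1 + (k : ℝ)⁻¹) ^ m * (k : ℝ) ^ m := by
        rw [← mul_pow]; field_simp
    _ ≤ (1 + (k : ℝ)⁻¹) ^ k * (k : ℝ) ^ m := by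
        gcongr
        exact le_add_of_nonneg_right (by positivity)
    _ ≤ exp 1 * (k : ℝ) ^ m := by
        gcongr
        exact one_add_inv_pow_le_exp

lemma choose_two_pow_div_factorial_le (n m : ℕ) :
    (n.choose 2 : ℝ) ^ m / m ! ≤ (exp 1 * n ^ 2 / (2 * m)) ^ m := by
  rcases Nat.eq_zero_or_pos m with rfl | hm
  · simp
  have hm' : (0 : ℝ) < m := by exact_mod_cast hm
  have hchoose : (n.choose 2 : ℝ) ≤ n ^ 2 / 2 := by
    rw [Nat.cast_choose_two]
    gcongr
    nlinarith
  calc (n.choose 2 : ℝ) ^ m / m ! ≤ (n ^ 2 / 2 : ℝ) ^ m / m ! := by gcongr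
    _ = (n ^ 2 / (2 * m) : ℝ) ^ m * ((m : ℝ) ^ m / m !) := by
        rw [div_pow, div_pow, mul_pow]; field_simp
    _ ≤ (n ^ 2 / (2 * m) : ℝ) ^ m * exp m := by
        gcongr; exact pow_div_factorial_le_exp _ hm'.le m
    _ = (exp 1 * n ^ 2 / (2 * m)) ^ m := by
        rw [← exp_one_pow, ← mul_pow]; ring_nf

lemma exp_one_mul_sq_pow_le (n m : ℕ) (hm : m ≠ 0) (hmn : m < n) :
    (exp 1 * n ^ 2 / (2 * m)) ^ m ≤ exp 1 ^ 2 * n * ((n.choose 2 : ℝ) ^ m / m !) := by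
  obtain ⟨k, rfl⟩ : ∃ k, n = k + 1 := ⟨n - 1, by omega⟩
  have hsqrt : √(m : ℝ) ≤ (k : ℝ) + 1 := by
    rw [Real.sqrt_le_left (by positivity)]
    have : (m : ℝ) ≤ k := by exact_mod_cast Nat.lt_succ_iff.mp hmn
    nlinarith
  have hpow := add_one_pow_le_exp_one_mul_pow (Nat.lt_succ_iff.mp hmn)
  have hfact := factorial_le_exp_one_mul_sqrt_mul_pow hm
  rw [mul_div_assoc', le_div_iff₀ (by positivity)]
  calc (exp 1 * ((k + 1 : ℕ) : ℝ) ^ 2 / (2 * m)) ^ m * m !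
      ≤ (exp 1 * ((k + 1 : ℕ) : ℝ) ^ 2 / (2 * m)) ^ m * (exp 1 * √m * (m / exp 1) ^ m) := by
        gcongr
    _ = exp 1 * √m * ((exp 1 * ((k + 1 : ℕ) : ℝ) ^ 2 / (2 * m)) * (m / exp 1)) ^ m := by
        rw [mul_pow]; ring
    _ = exp 1 * √m * (((k : ℝ) + 1) ^ m * (((k : ℝ) + 1) / 2) ^ m) := by
        rw [← mul_pow]; push_cast; field_simp
    _ ≤ exp 1 * ((k : ℝ) + 1) * ((exp 1 * (k : ℝ) ^ m) * (((k : ℝ) + 1) / 2) ^ m) := by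
        gcongr
    _ = exp 1 ^ 2 * ((k + 1 : ℕ) : ℝ) * (((k + 1).choose 2 : ℕ) : ℝ) ^ m := by
        rw [Nat.cast_choose_two]
        push_cast
        rw [add_sub_cancel_right, show ((k : ℝ) + 1) * k / 2 = ((k : ℝ) + 1) / 2 * k by ring,
          mul_pow]
        ring

lemma rpow_mul_kappa_one_sub {x c : ℝ} (hx : 0 ≤ x) (hc : 0 < c) :
    x ^ c * kappa (1 - c) = (exp 1 * x / (2 * c)) ^ c := by
  rw [kappa, sub_sub_cancel, rpow_neg hc.le, ← inv_rpow hc.le, ← mul_rpow (by positivity)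
    (by positivity), ← mul_rpow hx (by positivity)]
  congr 1
  field_simp

lemma rpow_mul_kappa_pow {n j : ℕ} (hj : j < n) :
    ((n : ℝ) ^ (1 - (j : ℝ) / n) * kappa ((j : ℝ) / n)) ^ n
      = (exp 1 * n ^ 2 / (2 * (n - j : ℕ))) ^ (n - j) := by
  have hn : (0 : ℝ) < n := by exact_mod_cast (Nat.zero_le j).trans_lt hj
  set c : ℝ := ((n - j : ℕ) : ℝ) / n with hc
  have hc0 : 0 < c := div_pos (by exact_mod_cast Nat.sub_pos_of_lt hj) hn
  have hjc : (j : ℝ) / n = 1 - c := by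
    rw [hc, Nat.cast_sub hj.le]; field_simp; ring
  rw [hjc, sub_sub_cancel, rpow_mul_kappa_one_sub hn.le hc0, ← rpow_natCast,
    ← rpow_mul (by positivity), hc, div_mul_cancel₀ _ hn.ne', rpow_natCast]
  congr 1
  field_simp

noncomputable def u6 (n : ℕ) : ℝ :=
  (n : ℝ) * ((n : ℝ) - 1) * (4 * (n : ℝ) - 5) / (6 * (Nat.choose n 2 : ℝ) ^ 2)

lemma mu6_eq_choose_mul_u6 (n j : ℕ) : mu6 n j = ((n - j).choose 2 : ℝ) * u6 n :=
  mul_div_assoc _ _ _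

lemma u6_le_d6 {n j : ℕ} (h : 2 ≤ n - j) : u6 n ≤ d6 n j := by
  have hm : (0 : ℝ) ≤ ((n - j : ℕ) : ℝ) - 2 := by
    rw [sub_nonneg]; exact_mod_cast h
  have hn : (2 : ℝ) ≤ n := by exact_mod_cast h.trans (Nat.sub_le n j)
  unfold d6 u6
  refine le_add_of_nonneg_right (mul_nonneg zero_le_two (add_nonneg (add_nonneg ?_ ?_) ?_))
  all_goals
    apply div_nonneg <;>
    repeat first | positivity | apply mul_nonneg | linarith

lemma u6_eq_div {n : ℕ} (hn : 2 ≤ n) :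
    u6 n = 2 * (4 * (n : ℝ) - 5) / (3 * n * ((n : ℝ) - 1)) := by
  have hn' : (2 : ℝ) ≤ n := by exact_mod_cast hn
  have : (n : ℝ) - 1 ≠ 0 := by linarith
  rw [u6, Nat.cast_choose_two]
  field_simp
  ring

lemma inv_le_u6 {n : ℕ} (hn : 2 ≤ n) : (n : ℝ)⁻¹ ≤ u6 n := by
  have hn' : (2 : ℝ) ≤ n := by exact_mod_cast hn
  rw [u6_eq_div hn, inv_eq_one_div, div_le_div_iff₀ (by positivity) (by nlinarith)]
  nlinarith

lemma inv_le_mu6 {n j : ℕ} (h : 2 ≤ n - j) : (n : ℝ)⁻¹ ≤ mu6 n j := by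
  have hu := inv_le_u6 (h.trans (Nat.sub_le n j))
  rw [mu6_eq_choose_mul_u6]
  refine hu.trans (le_mul_of_one_le_left ((inv_nonneg.2 n.cast_nonneg).trans hu) ?_)
  exact_mod_cast Nat.one_le_iff_ne_zero.2 (Nat.choose_pos h).ne'

lemma inv_sq_le_D6 {n j : ℕ} (h : 2 ≤ n - j) : ((n : ℝ) ^ 2)⁻¹ ≤ D6 n j := by
  have hn2 : 2 ≤ n := h.trans (Nat.sub_le n j)
  have hn : (2 : ℝ) ≤ n := by exact_mod_cast hn2
  have hinv : 0 < (n : ℝ)⁻¹ := inv_pos.2 (by positivity)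
  have hd : (n : ℝ)⁻¹ ≤ d6 n j := (inv_le_u6 hn2).trans (u6_le_d6 h)
  have hmu := inv_le_mu6 h
  have hsq : ((n : ℝ) ^ 2)⁻¹ = (n : ℝ)⁻¹ * (n : ℝ)⁻¹ := by rw [sq, mul_inv]
  refine le_min ?_ (le_min ?_ ?_)
  · rw [hsq]
    exact (mul_le_of_le_one_left hinv.le (inv_le_one_of_one_le₀ (by linarith))).trans hd
  · rw [hsq]; nlinarith
  · exact inv_le_one_of_one_le₀ (by nlinarith)

lemma D6_le_one (n j : ℕ) : D6 n j ≤ 1 :=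
  (min_le_right _ _).trans (min_le_right _ _)

lemma A6_eq (n j : ℕ) :
    A6 n j = (n.choose 2 : ℝ) ^ (n - j) / (n - j)! * (exp (-mu6 n j) + D6 n j) := by
  rw [A6, mul_assoc, mul_add, mul_one, ← mul_assoc, ← exp_add, neg_add_cancel, exp_zero,
    one_mul]

theorem stmt_15_general (n j : ℕ) (hj1 : 1 ≤ j) (hj2 : j ≤ n - 2) :
    Real.exp (-2) / (4 * (n : ℝ) ^ 3) *
        ((n : ℝ) ^ (1 - (j : ℝ) / n) * kappa ((j : ℝ) / n)) ^ n ≤ A6 n j ∧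
    A6 n j ≤ 2 * ((n : ℝ) ^ (1 - (j : ℝ) / n) * kappa ((j : ℝ) / n)) ^ n := by
  have hm : 2 ≤ n - j := by omega
  have hn : (0 : ℝ) < n := by exact_mod_cast (by omega : 0 < n)
  rw [rpow_mul_kappa_pow (by omega), A6_eq]
  set T := (exp 1 * (n : ℝ) ^ 2 / (2 * (n - j : ℕ))) ^ (n - j)
  set P := (n.choose 2 : ℝ) ^ (n - j) / (n - j)!
  have hPT : P ≤ T := choose_two_pow_div_factorial_le n (n - j)
  have hTP : T ≤ exp 1 ^ 2 * n * P := exp_one_mul_sq_pow_le n (n - j) (by omega) (by omega)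
  have hexp : exp (-mu6 n j) ≤ 1 :=
    exp_le_one_iff.2 (neg_nonpos.2 ((inv_nonneg.2 n.cast_nonneg).trans (inv_le_mu6 hm)))
  constructor
  · calc exp (-2) / (4 * (n : ℝ) ^ 3) * T
        ≤ exp (-2) / (4 * (n : ℝ) ^ 3) * (exp 1 ^ 2 * n * P) := by gcongr
      _ = P * (((n : ℝ) ^ 2)⁻¹ / 4) := by
          rw [exp_neg, exp_one_pow, Nat.cast_ofNat]; field_simp
      _ ≤ P * ((n : ℝ) ^ 2)⁻¹ := by gcongr; linarith [inv_pos.2 (pow_pos hn 2)]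
      _ ≤ P * (exp (-mu6 n j) + D6 n j) := by
          gcongr; linarith [exp_pos (-mu6 n j), inv_sq_le_D6 hm]
  · calc P * (exp (-mu6 n j) + D6 n j) ≤ P * 2 := by gcongr; linarith [D6_le_one n j]
      _ ≤ 2 * T := by linarith

theorem stmt_15 (n j : ℕ) (hn : 3 ≤ n) (hj1 : 1 ≤ j) (hj2 : j ≤ n - 2) :
    Real.exp (-2) / (4 * (n : ℝ) ^ 3) *
        ((n : ℝ) ^ (1 - (j : ℝ) / n) * kappa ((j : ℝ) / n)) ^ n ≤ A6 n j ∧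
    A6 n j ≤ 2 * ((n : ℝ) ^ (1 - (j : ℝ) / n) * kappa ((j : ℝ) / n)) ^ n :=
  stmt_15_general n j hj1 hj2
end

section
/- Let x0 and x1 be real numbers such that 0 < x0 < x1 < 1 and ν(x0) = ν(x1) = 1. For any pair of real numbers r0 and r1 with 0 < r0 < x0 and x1 < r1 < 1, there exist a real number Λ with 0 < Λ < 1 and a constant C > 0 such that for every pair of integers n, j with n ≥ 1, 1 ≤ j ≤ n, and j/n ∈ [0, r0] ∪ [r1, 1], one has n^{−n}·a(n,j) ≤ C·√n·Λ^n. -/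
noncomputable def stirling2 (n j : ℕ) : ℝ :=
  (1 / (Nat.factorial j : ℝ)) *
    ∑ i ∈ Finset.range (j + 1), (-1 : ℝ) ^ i * (Nat.choose j i : ℝ) * ((j - i : ℕ) : ℝ) ^ n

noncomputable def a (n j : ℕ) : ℝ :=
  (Nat.choose n j : ℝ) * (Nat.factorial j : ℝ) * stirling2 n j

noncomputable def varphi (x : ℝ) : ℝ := x ^ (-x) * (1 - x) ^ (-(1 - x))

noncomputable def nu (x : ℝ) : ℝ := x * Real.exp (-x) * varphi x ^ 2

/-!
The alternating sum `∑ (-1)^i C(j,i) (j-i)^n` satisfies the recursion of `Nat.stirlingSecond`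
scaled by `j!`, and the same recursion gives `S(n,j) ≤ C(n,j) j^(n-j)`. With `x = j/n`, the
binomial coefficient is at most `φ(x)^n` (it is one term of `(x + (1-x))^n` times `φ(x)^n`), and
`j! ≤ e √j (j/e)^j` by the monotonicity of the Stirling sequence; together
`n^(-n) a(n,j) ≤ e √n ν(x)^n`.

Finally `log ν = log x - x + 2 H(x)`, with `H` the binary entropy, is strictly concave on `(0,1)`
and vanishes at `x0 < x1`. Hence it is negative and monotone outside `[x0, x1]`:
`ν ≤ ν(r0) < 1` on `(0, r0]`, `ν ≤ ν(r1) < 1` on `[r1, 1)`, and `ν(1) = 1/e`.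
-/

open Finset Real Set
open scoped Nat

theorem alternating_sum_choose_pow_eq_factorial_mul_stirlingSecond {R : Type*} [CommRing R]
    (n j : ℕ) :
    ∑ i ∈ range (j + 1), (-1 : R) ^ i * (j.choose i : R) * ((j - i : ℕ) : R) ^ n =
      j ! * n.stirlingSecond j := by
  induction n generalizing j with
  | zero =>
    cases j with
    | zero => simp
    | succ j => simpa using (add_pow (-1 : R) 1 (j + 1)).symm
  | succ n ih =>
    cases j with
    | zero => simp
    | succ j =>
      have hpascal :
          ∑ i ∈ range (j + 2), (-1 : R) ^ i * ((j + 1).choose i : R) * ((j + 1 - i : ℕ) : R) ^ n =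
            ∑ i ∈ range (j + 1), (-1 : R) ^ i * (j.choose i : R) * ((j + 1 - i : ℕ) : R) ^ n -
              ∑ i ∈ range (j + 1), (-1 : R) ^ i * (j.choose i : R) * ((j - i : ℕ) : R) ^ n := by
        simpa [sub_eq_add_neg, ← sum_neg_distrib, pow_succ, mul_comm, mul_left_comm, mul_assoc]
          using sum_choose_succ_mul (fun i k => (-1 : R) ^ i * (k : R) ^ n) j
      calc ∑ i ∈ range (j + 2),
            (-1 : R) ^ i * ((j + 1).choose i : R) * ((j + 1 - i : ℕ) : R) ^ (n + 1)
          = (j + 1) *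
              ∑ i ∈ range (j + 1), (-1 : R) ^ i * (j.choose i : R) * ((j + 1 - i : ℕ) : R) ^ n := by
            rw [sum_range_succ, Nat.sub_self, Nat.cast_zero, zero_pow n.succ_ne_zero, mul_zero,
              add_zero, mul_sum]
            refine sum_congr rfl fun i _ => ?_
            have h :
                ((j.choose i * (j + 1) : ℕ) : R) = (((j + 1).choose i * (j + 1 - i) : ℕ) : R) :=
              congrArg _ (Nat.choose_mul_succ_eq j i)
            simp only [Nat.cast_mul, Nat.cast_add, Nat.cast_one] at h
            linear_combination -(-1 : R) ^ i * ((j + 1 - i : ℕ) : R) ^ n * h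
        _ = (j + 1) * ((j + 1)! * n.stirlingSecond (j + 1) + j ! * n.stirlingSecond j) := by
            rw [← ih, ← ih, hpascal, sub_add_cancel]
        _ = (j + 1)! * (n + 1).stirlingSecond (j + 1) := by
            rw [Nat.stirlingSecond_succ_succ, Nat.factorial_succ]; push_cast; ring

theorem Nat.stirlingSecond_le_choose_mul_pow (n k : ℕ) :
    n.stirlingSecond k ≤ n.choose k * k ^ (n - k) := by
  induction n generalizing k with
  | zero => cases k <;> simp
  | succ n ih =>
    cases k with
    | zero => simp
    | succ k =>
      have hlast : (k + 1) * (n.choose (k + 1) * (k + 1) ^ (n - (k + 1)))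
          = n.choose (k + 1) * (k + 1) ^ (n - k) := by
        rcases Nat.lt_or_ge k n with hkn | hnk
        · rw [show n - k = n - (k + 1) + 1 by omega, pow_succ]; ring
        · rw [choose_eq_zero_of_lt (by omega)]; simp
      calc (n + 1).stirlingSecond (k + 1)
          = (k + 1) * n.stirlingSecond (k + 1) + n.stirlingSecond k := stirlingSecond_succ_succ n k
        _ ≤ (k + 1) * (n.choose (k + 1) * (k + 1) ^ (n - (k + 1))) + n.choose k * k ^ (n - k) := by
          gcongr <;> apply ih
        _ ≤ n.choose (k + 1) * (k + 1) ^ (n - k) + n.choose k * (k + 1) ^ (n - k) := by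
          rw [hlast]; gcongr; omega
        _ = (n + 1).choose (k + 1) * (k + 1) ^ (n + 1 - (k + 1)) := by
          rw [choose_succ_succ', Nat.add_sub_add_right]; ring

theorem stirling2_eq_stirlingSecond (n j : ℕ) : stirling2 n j = n.stirlingSecond j := by
  rw [stirling2, alternating_sum_choose_pow_eq_factorial_mul_stirlingSecond]
  field_simp

theorem a_le_factorial_mul_choose_sq_mul_pow (n j : ℕ) :
    a n j ≤ j ! * (n.choose j : ℝ) ^ 2 * j ^ (n - j) := by
  have h : (n.stirlingSecond j : ℝ) ≤ n.choose j * j ^ (n - j) := by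
    exact_mod_cast Nat.stirlingSecond_le_choose_mul_pow n j
  calc a n j = n.choose j * j ! * n.stirlingSecond j := by rw [a, stirling2_eq_stirlingSecond]
    _ ≤ n.choose j * j ! * (n.choose j * j ^ (n - j)) := by gcongr
    _ = j ! * (n.choose j : ℝ) ^ 2 * j ^ (n - j) := by ring

-- Also true at `y = 0`, where `m = 0` and `0 ^ (-0) = 1`.
theorem rpow_neg_self_pow_mul_pow_eq_one {y : ℝ} {n m : ℕ} (hy : 0 ≤ y) (hyn : y * n = m) :
    (y ^ (-y)) ^ n * y ^ m = 1 := by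
  rcases hy.eq_or_lt with rfl | hy
  · obtain rfl : m = 0 := by exact_mod_cast ((zero_mul (n : ℝ)).symm.trans hyn).symm
    simp
  · rw [← rpow_natCast, ← rpow_mul hy.le, ← rpow_natCast y m, ← rpow_add hy, neg_mul, hyn,
      neg_add_cancel, rpow_zero]

theorem varphi_pow_mul_eq_one {x : ℝ} {n j : ℕ} (hx0 : 0 ≤ x) (hx1 : x ≤ 1) (hjn : j ≤ n)
    (hxn : x * n = j) : varphi x ^ n * (x ^ j * (1 - x) ^ (n - j)) = 1 := by
  have h1xn : (1 - x) * n = ((n - j : ℕ) : ℝ) := by rw [Nat.cast_sub hjn, sub_mul, one_mul, hxn]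
  rw [varphi, mul_pow, mul_mul_mul_comm, rpow_neg_self_pow_mul_pow_eq_one hx0 hxn,
    rpow_neg_self_pow_mul_pow_eq_one (by linarith) h1xn, one_mul]

theorem varphi_nonneg {x : ℝ} (hx0 : 0 ≤ x) (hx1 : x ≤ 1) : 0 ≤ varphi x :=
  mul_nonneg (rpow_nonneg hx0 _) (rpow_nonneg (by linarith) _)

theorem choose_le_varphi_pow {n j : ℕ} (hn : 0 < n) (hjn : j ≤ n) :
    (n.choose j : ℝ) ≤ varphi (j / n) ^ n := by
  set x : ℝ := j / n
  have hnR : (0 : ℝ) < n := by exact_mod_cast hn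
  have hx0 : 0 ≤ x := by positivity
  have hx1 : x ≤ 1 := div_le_one_of_le₀ (by exact_mod_cast hjn) hnR.le
  have hterm : x ^ j * (1 - x) ^ (n - j) * n.choose j ≤ 1 :=
    calc x ^ j * (1 - x) ^ (n - j) * n.choose j
        ≤ ∑ k ∈ range (n + 1), x ^ k * (1 - x) ^ (n - k) * n.choose k :=
          single_le_sum (f := fun k => x ^ k * (1 - x) ^ (n - k) * n.choose k)
            (fun k _ => mul_nonneg (mul_nonneg (pow_nonneg hx0 k) (pow_nonneg (by linarith) _))
              (Nat.cast_nonneg _)) (mem_range.mpr (by omega))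
      _ = 1 := by rw [← add_pow, add_sub_cancel, one_pow]
  calc (n.choose j : ℝ)
      = varphi x ^ n * (x ^ j * (1 - x) ^ (n - j)) * n.choose j := by
        rw [varphi_pow_mul_eq_one hx0 hx1 hjn (div_mul_cancel₀ _ hnR.ne'), one_mul]
    _ ≤ varphi x ^ n := by
        rw [mul_assoc]
        exact mul_le_of_le_one_right (pow_nonneg (varphi_nonneg hx0 hx1) n) hterm

theorem factorial_le_exp_one_mul_sqrt_mul {n : ℕ} (hn : n ≠ 0) :
    (n ! : ℝ) ≤ exp 1 * √n * (n / exp 1) ^ n := by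
  obtain ⟨m, rfl⟩ : ∃ m, n = m + 1 := ⟨n - 1, by omega⟩
  have h : Stirling.stirlingSeq (m + 1) ≤ Stirling.stirlingSeq 1 :=
    Stirling.stirlingSeq'_antitone (Nat.zero_le m)
  rw [Stirling.stirlingSeq_one, Stirling.stirlingSeq,
    div_le_div_iff₀ (by positivity) (by positivity), sqrt_mul zero_le_two] at h
  exact le_of_mul_le_mul_right (by linarith) (by positivity : (0 : ℝ) < √2)

theorem nu_nonneg {x : ℝ} (hx : 0 ≤ x) : 0 ≤ nu x := by
  unfold nu; positivity

theorem nu_pos {x : ℝ} (hx0 : 0 < x) (hx1 : x < 1) : 0 < nu x := by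
  unfold nu varphi
  have : 0 < 1 - x := by linarith
  positivity

theorem log_varphi {x : ℝ} (hx0 : 0 < x) (hx1 : x < 1) : log (varphi x) = binEntropy x := by
  have : 0 < 1 - x := by linarith
  rw [varphi, log_mul (by positivity) (by positivity), log_rpow hx0, log_rpow this, binEntropy,
    log_inv, log_inv]
  ring

theorem log_nu {x : ℝ} (hx0 : 0 < x) (hx1 : x < 1) :
    log (nu x) = log x - x + 2 * binEntropy x := by
  have : 0 < varphi x := by
    unfold varphi
    have : 0 < 1 - x := by linarith
    positivity
  rw [nu, log_mul (by positivity) (by positivity), log_mul hx0.ne' (exp_ne_zero _), log_exp,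
    log_pow, log_varphi hx0 hx1]
  push_cast
  ring

theorem strictConcaveOn_log_nu : StrictConcaveOn ℝ (Ioo 0 1) (fun x => log (nu x)) := by
  have hlog : StrictConcaveOn ℝ (Ioo 0 1) log :=
    strictConcaveOn_log_Ioi.subset Ioo_subset_Ioi_self (convex_Ioo 0 1)
  have hH : StrictConcaveOn ℝ (Ioo 0 1) binEntropy :=
    strictConcave_binEntropy.subset Ioo_subset_Icc_self (convex_Ioo 0 1)
  refine ((hlog.add_concaveOn (convexOn_id (convex_Ioo (0 : ℝ) 1)).neg).add (hH.add hH)).congr ?_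
  intro x hx
  simp only [Pi.add_apply, Pi.neg_apply, id, log_nu hx.1 hx.2]
  ring

theorem StrictConcaveOn.lt_left_of_eq {s : Set ℝ} {f : ℝ → ℝ} (hf : StrictConcaveOn ℝ s f)
    {x y z : ℝ} (hz : z ∈ s) (hy : y ∈ s) (hzx : z < x) (hxy : x < y) (hfxy : f x = f y) :
    f z < f x := by
  have h := hf.slope_anti_adjacent hz hy hzx hxy
  rw [hfxy, sub_self, zero_div, lt_div_iff₀ (by linarith), zero_mul] at h
  linarith

theorem StrictConcaveOn.lt_right_of_eq {s : Set ℝ} {f : ℝ → ℝ} (hf : StrictConcaveOn ℝ s f)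
    {x y z : ℝ} (hx : x ∈ s) (hz : z ∈ s) (hxy : x < y) (hyz : y < z) (hfxy : f x = f y) :
    f z < f y := by
  have h := hf.slope_anti_adjacent hx hz hxy hyz
  rw [hfxy, sub_self, zero_div, div_lt_iff₀ (by linarith), zero_mul] at h
  linarith

theorem nu_one : nu 1 = exp (-1) := by
  simp [nu, varphi]

theorem nu_le_and_lt_one_of_le_of_lt {x0 x1 r t : ℝ} (hx0 : 0 < x0) (hx01 : x0 < x1)
    (hx1 : x1 < 1) (hnu0 : nu x0 = 1) (hnu1 : nu x1 = 1) (ht : 0 < t) (htr : t ≤ r)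
    (hrx : r < x0) : nu t ≤ nu r ∧ nu r < 1 := by
  have hg := strictConcaveOn_log_nu
  have hr : log (nu r) < log (nu x0) :=
    hg.lt_left_of_eq ⟨by linarith, by linarith⟩ ⟨by linarith, hx1⟩ hrx hx01 (by rw [hnu0, hnu1])
  have ht : log (nu t) ≤ log (nu r) :=
    hg.concaveOn.left_le_of_le_right'' ⟨ht, by linarith⟩ ⟨hx0, by linarith⟩ htr hrx hr.le
  refine ⟨(log_le_log_iff (nu_pos ?_ ?_) (nu_pos ?_ ?_)).mp ht,
    hnu0 ▸ (log_lt_log_iff (nu_pos ?_ ?_) (nu_pos ?_ ?_)).mp hr⟩ <;> linarith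

theorem nu_le_and_lt_one_of_lt_of_le {x0 x1 r t : ℝ} (hx0 : 0 < x0) (hx01 : x0 < x1)
    (hx1 : x1 < 1) (hnu0 : nu x0 = 1) (hnu1 : nu x1 = 1) (hxr : x1 < r) (hrt : r ≤ t)
    (ht : t < 1) : nu t ≤ nu r ∧ nu r < 1 := by
  have hg := strictConcaveOn_log_nu
  have hr : log (nu r) < log (nu x1) :=
    hg.lt_right_of_eq ⟨hx0, by linarith⟩ ⟨by linarith, by linarith⟩ hx01 hxr (by rw [hnu0, hnu1])
  have ht : log (nu t) ≤ log (nu r) :=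
    hg.concaveOn.right_le_of_le_left'' ⟨by linarith, hx1⟩ ⟨by linarith, ht⟩ hxr hrt hr.le
  refine ⟨(log_le_log_iff (nu_pos ?_ ?_) (nu_pos ?_ ?_)).mp ht,
    hnu1 ▸ (log_lt_log_iff (nu_pos ?_ ?_) (nu_pos ?_ ?_)).mp hr⟩ <;> linarith

theorem exists_lt_one_forall_nu_le {x0 x1 r0 r1 : ℝ} (hx0 : 0 < x0) (hx01 : x0 < x1)
    (hx1 : x1 < 1) (hnu0 : nu x0 = 1) (hnu1 : nu x1 = 1) (hr0 : 0 < r0) (hr0x : r0 < x0)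
    (hr1x : x1 < r1) (hr1 : r1 < 1) :
    ∃ Λ : ℝ, 0 < Λ ∧ Λ < 1 ∧ ∀ x : ℝ, 0 < x → x ≤ 1 → (x ≤ r0 ∨ r1 ≤ x) → nu x ≤ Λ := by
  have hleft {t : ℝ} (ht : 0 < t) (htr : t ≤ r0) : nu t ≤ nu r0 ∧ nu r0 < 1 :=
    nu_le_and_lt_one_of_le_of_lt hx0 hx01 hx1 hnu0 hnu1 ht htr hr0x
  have hright {t : ℝ} (hrt : r1 ≤ t) (ht : t < 1) : nu t ≤ nu r1 ∧ nu r1 < 1 :=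
    nu_le_and_lt_one_of_lt_of_le hx0 hx01 hx1 hnu0 hnu1 hr1x hrt ht
  refine ⟨max (max (nu r0) (nu r1)) (exp (-1)), by positivity,
    max_lt (max_lt (hleft hr0 le_rfl).2 (hright le_rfl hr1).2) (exp_lt_one_iff.mpr (by norm_num)),
    fun x hx0 hx1 hx => ?_⟩
  rcases hx1.lt_or_eq with hx1 | rfl
  · rcases hx with hx | hx
    · exact (hleft hx0 hx).1.trans ((le_max_left _ _).trans (le_max_left _ _))
    · exact (hright hx hx1).1.trans ((le_max_right _ _).trans (le_max_left _ _))
  · exact nu_one.trans_le (le_max_right _ _)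

theorem rpow_neg_mul_a_le {n j : ℕ} (hj : j ≠ 0) (hjn : j ≤ n) :
    (n : ℝ) ^ (-(n : ℝ)) * a n j ≤ exp 1 * √n * nu (j / n) ^ n := by
  have hn : 0 < n := by omega
  have hnR : (0 : ℝ) < n := by exact_mod_cast hn
  set x : ℝ := j / n
  have hxn : x * n = j := div_mul_cancel₀ _ hnR.ne'
  have hfact : (j ! : ℝ) ≤ exp 1 * √n * (j / exp 1) ^ j :=
    (factorial_le_exp_one_mul_sqrt_mul hj).trans (by gcongr)
  have hnu : nu x ^ n * n ^ n = j ^ n / exp 1 ^ j * (varphi x ^ n) ^ 2 := by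
    rw [nu, mul_pow, mul_pow, ← exp_nat_mul, mul_neg, mul_comm (n : ℝ), hxn, exp_neg,
      ← exp_one_pow, ← hxn]
    ring
  calc (n : ℝ) ^ (-(n : ℝ)) * a n j
      ≤ ((n : ℝ) ^ n)⁻¹ * (j ! * (varphi x ^ n) ^ 2 * j ^ (n - j)) := by
        rw [rpow_neg hnR.le, rpow_natCast]
        gcongr
        exact (a_le_factorial_mul_choose_sq_mul_pow n j).trans
          (by gcongr; exact choose_le_varphi_pow hn hjn)
    _ ≤ ((n : ℝ) ^ n)⁻¹ * (exp 1 * √n * (j / exp 1) ^ j * (varphi x ^ n) ^ 2 * j ^ (n - j)) := by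
        gcongr
    _ = exp 1 * √n * nu x ^ n := by
        rw [← mul_inv_cancel_right₀ (pow_ne_zero n hnR.ne') (nu x ^ n), hnu, div_pow,
          ← pow_mul_pow_sub (j : ℝ) hjn]
        ring

theorem stmt_17 (x0 x1 : ℝ) (hx0 : 0 < x0) (hx01 : x0 < x1) (hx1 : x1 < 1)
    (hnu0 : nu x0 = 1) (hnu1 : nu x1 = 1)
    (r0 r1 : ℝ) (hr0 : 0 < r0) (hr0x : r0 < x0) (hr1x : x1 < r1) (hr1 : r1 < 1) :
    ∃ Λ C : ℝ, 0 < Λ ∧ Λ < 1 ∧ 0 < C ∧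
      ∀ n j : ℕ, 1 ≤ n → 1 ≤ j → j ≤ n →
        ((j : ℝ) / n ≤ r0 ∨ r1 ≤ (j : ℝ) / n) →
        (n : ℝ) ^ (-(n : ℝ)) * a n j ≤ C * Real.sqrt n * Λ ^ n := by
  obtain ⟨Λ, hΛ0, hΛ1, hνΛ⟩ :=
    exists_lt_one_forall_nu_le hx0 hx01 hx1 hnu0 hnu1 hr0 hr0x hr1x hr1
  refine ⟨Λ, exp 1, hΛ0, hΛ1, exp_pos 1, fun n j _ hj hjn hx => ?_⟩
  have hnR : (0 : ℝ) < n := by exact_mod_cast hj.trans hjn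
  have hx0 : (0 : ℝ) < j / n := div_pos (by exact_mod_cast hj) hnR
  calc (n : ℝ) ^ (-(n : ℝ)) * a n j ≤ exp 1 * √n * nu (j / n) ^ n :=
        rpow_neg_mul_a_le (by omega) hjn
    _ ≤ exp 1 * √n * Λ ^ n := by
        gcongr
        · exact nu_nonneg hx0.le
        · exact hνΛ _ hx0 (div_le_one_of_le₀ (by exact_mod_cast hjn) hnR.le) hx
end
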